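/- arXiv:1804.07371 — 3 statements merged into one kernel-verified Lean document; each statement's English description precedes it below -/
import Mathlib

section
/- Let $\hat{\gamma} \sim \mathrm{N}(\gamma, \sigma_X^2)$ and $\hat{\Gamma} \sim \mathrm{N}(\beta\gamma, \sigma_Y^2)$ be independent with $\sigma_X, \sigma_Y > 0$ (the model with parameters $(\beta, \gamma)$ and $\Gamma = \beta\gamma$). Define the score of $\beta$ as $S(\beta, \gamma) = \gamma(\hat{\Gamma} - \beta\gamma)/\sigma_Y^2$ and $W(\beta) = \hat{\gamma}/\sigma_X^2 + \beta\hat{\Gamma}/\sigma_Y^2$. Then the conditional score satisfies, almost surely, $S(\beta, \gamma) - \mathbb{E}[S(\beta, \gamma) \mid W(\beta)] = \gamma(\hat{\Gamma} - \beta\hat{\gamma}) / (\beta^2\sigma_X^2 + \sigma_Y^2)$. -/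
/-!
The variables `V = Γ̂ - βγ̂` and `W(β)` are linear images of the independent Gaussian pair
`(γ̂, Γ̂)` with `Cov(V, W) = -β + β = 0`, so they are jointly Gaussian and uncorrelated, hence
independent. Since `S = γV / (β²σ_X² + σ_Y²) + (an affine function of W)` and `E[V] = 0`,
conditioning on `W` removes exactly the affine part.
-/

open MeasureTheory ProbabilityTheory

namespace ProbabilityTheory

variable {Ω β E : Type*} [MeasurableSpace Ω] {μ : Measure Ω} [MeasurableSpace β]
  [NormedAddCommGroup E] [NormedSpace ℝ E] [CompleteSpace E] [MeasurableSpace E] [BorelSpace E]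
  [SecondCountableTopology E]

lemma IndepFun.indepFun_linear_of_hasGaussianLaw {X Y : Ω → ℝ}
    (hX : HasGaussianLaw X μ) (hY : HasGaussianLaw Y μ) (hXY : IndepFun X Y μ) {a b c d : ℝ}
    (h : a * c * Var[X; μ] + b * d * Var[Y; μ] = 0) :
    IndepFun (fun ω => a * X ω + b * Y ω) (fun ω => c * X ω + d * Y ω) μ := by
  have := hX.isProbabilityMeasure
  have hX2 := hX.memLp_two
  have hY2 := hY.memLp_two
  let L : ℝ × ℝ →L[ℝ] ℝ × ℝ :=
    (a • ContinuousLinearMap.fst ℝ ℝ ℝ + b • ContinuousLinearMap.snd ℝ ℝ ℝ).prod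
      (c • ContinuousLinearMap.fst ℝ ℝ ℝ + d • ContinuousLinearMap.snd ℝ ℝ ℝ)
  refine HasGaussianLaw.indepFun_of_covariance_eq_zero ((hXY.hasGaussianLaw hX hY).map_fun L) ?_
  have hXY0 : cov[X, Y; μ] = 0 := hXY.covariance_eq_zero hX2 hY2
  have hYX0 : cov[Y, X; μ] = 0 := by rw [covariance_comm, hXY0]
  show cov[(fun ω => a * X ω) + (fun ω => b * Y ω), (fun ω => c * X ω) + (fun ω => d * Y ω); μ]
    = 0
  rw [covariance_add_left (hX2.const_mul a) (hY2.const_mul b)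
      ((hX2.const_mul c).add (hY2.const_mul d)),
    covariance_add_right (hX2.const_mul a) (hX2.const_mul c) (hY2.const_mul d),
    covariance_add_right (hY2.const_mul b) (hX2.const_mul c) (hY2.const_mul d)]
  simp only [covariance_const_mul_left, covariance_const_mul_right,
    covariance_self hX.aemeasurable, covariance_self hY.aemeasurable, hXY0, hYX0]
  linear_combination h

lemma IndepFun.condExp_comap_eq_integral [IsFiniteMeasure μ] {V : Ω → E} {W : Ω → β}
    (hV : Measurable V) (hW : Measurable W) (hVW : IndepFun V W μ) :
    μ[V | MeasurableSpace.comap W ‹_›] =ᵐ[μ] fun _ => μ[V] :=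
  condExp_indep_eq hV.comap_le hW.comap_le (comap_measurable V).stronglyMeasurable
    ((IndepFun_iff_Indep V W μ).1 hVW)

lemma IndepFun.condExp_comap_add_comp [IsFiniteMeasure μ] {V : Ω → E} {W : Ω → β} {k : β → E}
    (hV : Measurable V) (hW : Measurable W) (hk : Measurable k) (hVW : IndepFun V W μ)
    (hVint : Integrable V μ) (hkW : Integrable (fun ω => k (W ω)) μ) :
    μ[fun ω => V ω + k (W ω) | MeasurableSpace.comap W ‹_›] =ᵐ[μ] fun ω => μ[V] + k (W ω) := by
  have hkW_meas : StronglyMeasurable[MeasurableSpace.comap W ‹_›] fun ω => k (W ω) :=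
    (hk.comp (comap_measurable W)).stronglyMeasurable
  filter_upwards [condExp_add hVint hkW (MeasurableSpace.comap W ‹_›),
    hVW.condExp_comap_eq_integral hV hW] with ω hadd hV_ω
  rw [show (fun ω => V ω + k (W ω)) = V + fun ω => k (W ω) from rfl, hadd, Pi.add_apply, hV_ω,
    condExp_of_stronglyMeasurable hW.comap_le hkW_meas hkW]

end ProbabilityTheory

/-- **The conditional score.** In the model where `γ̂ ~ N(γ, σ_X²)` and `Γ̂ ~ N(βγ, σ_Y²)` are
independent, the score of `β` is `S(β,γ) = γ(Γ̂ - βγ)/σ_Y²` and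
`W(β) = γ̂/σ_X² + βΓ̂/σ_Y²`. Then almost surely
`S(β,γ) - E[S(β,γ) | W(β)] = γ(Γ̂ - βγ̂)/(β²σ_X² + σ_Y²)`. -/
theorem conditional_score_eq
    {Ω : Type*} [MeasurableSpace Ω] (μ : Measure Ω) [IsProbabilityMeasure μ]
    (γhat Γhat : Ω → ℝ) (hγhat : Measurable γhat) (hΓhat : Measurable Γhat)
    (β γ σX σY : ℝ) (hσX : 0 < σX) (hσY : 0 < σY)
    (hγlaw : μ.map γhat = gaussianReal γ (Real.toNNReal (σX ^ 2)))
    (hΓlaw : μ.map Γhat = gaussianReal (β * γ) (Real.toNNReal (σY ^ 2)))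
    (hindep : IndepFun γhat Γhat μ) :
    (fun ω => γ * (Γhat ω - β * γ) / σY ^ 2)
        - μ[fun ω => γ * (Γhat ω - β * γ) / σY ^ 2
            | MeasurableSpace.comap (fun ω => γhat ω / σX ^ 2 + β * Γhat ω / σY ^ 2)
                inferInstance]
      =ᵐ[μ] fun ω => γ * (Γhat ω - β * γhat ω) / (β ^ 2 * σX ^ 2 + σY ^ 2) := by
  have hγ : HasLaw γhat (gaussianReal γ (σX ^ 2).toNNReal) μ := ⟨hγhat.aemeasurable, hγlaw⟩
  have hΓ : HasLaw Γhat (gaussianReal (β * γ) (σY ^ 2).toNNReal) μ := ⟨hΓhat.aemeasurable, hΓlaw⟩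
  have hγint := hγ.hasGaussianLaw.integrable
  have hΓint := hΓ.hasGaussianLaw.integrable
  set D := β ^ 2 * σX ^ 2 + σY ^ 2
  set V := fun ω => γ * (Γhat ω - β * γhat ω) / D
  set W := fun ω => γhat ω / σX ^ 2 + β * Γhat ω / σY ^ 2
  have hVW : IndepFun V W μ := by
    have hcov : -(γ * β / D) * (1 / σX ^ 2) * Var[γhat; μ]
        + γ / D * (β / σY ^ 2) * Var[Γhat; μ] = 0 := by
      rw [hγ.variance_eq, hΓ.variance_eq, variance_id_gaussianReal, variance_id_gaussianReal,
        Real.coe_toNNReal _ (by positivity), Real.coe_toNNReal _ (by positivity)]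
      field_simp
      ring
    convert hindep.indepFun_linear_of_hasGaussianLaw hγ.hasGaussianLaw hΓ.hasGaussianLaw hcov
      using 1 <;> funext ω <;> ring
  have hV0 : μ[V] = 0 := by
    rw [integral_div, integral_const_mul, integral_sub hΓint (hγint.const_mul β),
      integral_const_mul, hγ.integral_eq, hΓ.integral_eq, integral_id_gaussianReal,
      integral_id_gaussianReal, sub_self, mul_zero, zero_div]
  have hk : Measurable fun w : ℝ =>
      γ * (β * w / (1 / σX ^ 2 + β ^ 2 / σY ^ 2) - β * γ) / σY ^ 2 := by
    fun_prop
  have hS : (fun ω => γ * (Γhat ω - β * γ) / σY ^ 2)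
      = fun ω => V ω + γ * (β * W ω / (1 / σX ^ 2 + β ^ 2 / σY ^ 2) - β * γ) / σY ^ 2 := by
    funext ω
    simp only [V, W, D]
    field_simp
    ring
  rw [hS]
  filter_upwards [hVW.condExp_comap_add_comp (by fun_prop) (by fun_prop) hk (by fun_prop)
    (by fun_prop)] with ω hω
  rw [Pi.sub_apply, hω, hV0, zero_add, add_sub_cancel_right]
end

section
/- For $j = 1, \dots, p$ let $\hat{\gamma}_j \sim \mathrm{N}(\gamma_j, \sigma_{Xj}^2)$ and $\hat{\Gamma}_j \sim \mathrm{N}(\beta\gamma_j, \sigma_{Yj}^2)$ be mutually independent, with $\sigma_{Xj}, \sigma_{Yj} > 0$. Let $W_j(\beta) = \hat{\gamma}_j/\sigma_{Xj}^2 + \beta\hat{\Gamma}_j/\sigma_{Yj}^2$, and let $t_j(\beta) = (\hat{\Gamma}_j - \beta\hat{\gamma}_j)/\sqrt{\beta^2\sigma_{Xj}^2 + \sigma_{Yj}^2}$. Let $f_j : \mathbb{R} \times \mathbb{R} \to \mathbb{R}$ be measurable functions and $\psi : \mathbb{R} \to \mathbb{R}$ a measurable odd function (i.e., $\psi(-t)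 = -\psi(t)$), such that each $f_j(\beta, W_j(\beta))$ and $\psi(t_j(\beta))$ are integrable. Then the estimating function $C(\beta) = \sum_{j=1}^p f_j(\beta, W_j(\beta)) \cdot \psi(t_j(\beta)) / \sqrt{\beta^2\sigma_{Xj}^2 + \sigma_{Yj}^2}$ is unbiased at the true parameter: $\mathbb{E}[C(\beta)] = 0$. -/
/-!
For each SNP, `W(β)` and `t(β)` are linear in the pair `(γ̂, Γ̂)`, which is jointly Gaussian by
independence, and with `s = √(β²σ_X² + σ_Y²)` their covariance is `-β/s + β/s = 0`; being jointly
Gaussian, they are independent. Moreover `t(β)` is centred because `E Γ̂ = β E γ̂`, so its law is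
symmetric and the odd `ψ` has mean zero under it. Each summand therefore factorizes as
`E f(β, W) · E ψ(t) / s = 0`.
-/

open MeasureTheory ProbabilityTheory
open scoped ENNReal NNReal

namespace ProbabilityTheory

variable {Ω : Type*} [MeasurableSpace Ω] {μ : Measure Ω}

lemma integral_gaussianReal_of_odd {ψ : ℝ → ℝ} (hψ : ∀ t, ψ (-t) = -ψ t) (v : ℝ≥0) :
    ∫ x, ψ x ∂gaussianReal 0 v = 0 := by
  have h : ∫ x, ψ (-x) ∂gaussianReal 0 v = ∫ x, ψ x ∂gaussianReal 0 v := by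
    conv_rhs => rw [← neg_zero, ← gaussianReal_map_neg]
    exact (integral_map_equiv (MeasurableEquiv.neg ℝ) ψ).symm
  simp only [hψ, integral_neg] at h
  linarith

lemma HasGaussianLaw.integral_comp_of_odd {T : Ω → ℝ} (hT : HasGaussianLaw T μ)
    (hT0 : μ[T] = 0) {ψ : ℝ → ℝ} (hψ : Measurable ψ) (hodd : ∀ t, ψ (-t) = -ψ t) :
    ∫ ω, ψ (T ω) ∂μ = 0 := by
  rw [← integral_map hT.aemeasurable hψ.aestronglyMeasurable, hT.map_eq_gaussianReal, hT0,
    integral_gaussianReal_of_odd hodd]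

lemma HasLaw.integral_eq_of_gaussianReal {X : Ω → ℝ} {m : ℝ} {v : ℝ≥0}
    (hX : HasLaw X (gaussianReal m v) μ) : μ[X] = m :=
  hX.integral_eq.trans integral_id_gaussianReal

lemma HasLaw.variance_eq_of_gaussianReal {X : Ω → ℝ} {m : ℝ} {v : ℝ≥0}
    (hX : HasLaw X (gaussianReal m v) μ) : Var[X; μ] = v :=
  hX.variance_eq.trans variance_id_gaussianReal

lemma HasGaussianLaw.prodMk_linear {X Y : Ω → ℝ} (hXY : HasGaussianLaw (fun ω ↦ (X ω, Y ω)) μ)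
    (a b c d : ℝ) :
    HasGaussianLaw (fun ω ↦ (a * X ω + b * Y ω, c * X ω + d * Y ω)) μ := by
  let fst := ContinuousLinearMap.fst ℝ ℝ ℝ
  let snd := ContinuousLinearMap.snd ℝ ℝ ℝ
  exact hXY.map_fun ((a • fst + b • snd).prod (c • fst + d • snd))

lemma IndepFun.covariance_linear {X Y : Ω → ℝ} [IsFiniteMeasure μ] (hXY : IndepFun X Y μ)
    (hX : MemLp X 2 μ) (hY : MemLp Y 2 μ) (a b c d : ℝ) :
    cov[fun ω ↦ a * X ω + b * Y ω, fun ω ↦ c * X ω + d * Y ω; μ]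
      = a * c * Var[X; μ] + b * d * Var[Y; μ] := by
  have hcov : cov[X, Y; μ] = 0 := hXY.covariance_eq_zero hX hY
  have hcov' : cov[Y, X; μ] = 0 := by rw [covariance_comm, hcov]
  have hXc : ∀ k : ℝ, MemLp (fun ω ↦ k * X ω) 2 μ := fun k ↦ hX.const_mul k
  have hYc : ∀ k : ℝ, MemLp (fun ω ↦ k * Y ω) 2 μ := fun k ↦ hY.const_mul k
  change cov[(fun ω ↦ a * X ω) + (fun ω ↦ b * Y ω), (fun ω ↦ c * X ω) + (fun ω ↦ d * Y ω); μ] = _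
  rw [covariance_add_left (hXc a) (hYc b) ((hXc c).add (hYc d)),
    covariance_add_right (hXc a) (hXc c) (hYc d), covariance_add_right (hYc b) (hXc c) (hYc d)]
  simp only [covariance_const_mul_left, covariance_const_mul_right, hcov, hcov',
    covariance_self hX.aemeasurable, covariance_self hY.aemeasurable]
  ring

end ProbabilityTheory

namespace MendelianRandomization

variable {Ω : Type*} [MeasurableSpace Ω] {μ : Measure Ω}

noncomputable def residualSD (σX σY β : ℝ) : ℝ := √(β ^ 2 * σX ^ 2 + σY ^ 2)

noncomputable def sufficientStat (σX σY β x y : ℝ) : ℝ := x / σX ^ 2 + β * y / σY ^ 2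

noncomputable def stdResidual (σX σY β x y : ℝ) : ℝ := (y - β * x) / residualSD σX σY β

lemma sufficientStat_eq_linear (σX σY β x y : ℝ) :
    sufficientStat σX σY β x y = (σX ^ 2)⁻¹ * x + β / σY ^ 2 * y := by
  rw [sufficientStat]; ring

lemma stdResidual_eq_linear (σX σY β x y : ℝ) :
    stdResidual σX σY β x y = -β / residualSD σX σY β * x + (residualSD σX σY β)⁻¹ * y := by
  rw [stdResidual]; ring

variable {X Y : Ω → ℝ} {σX σY β : ℝ}

lemma hasGaussianLaw_sufficientStat_stdResidual (hX : HasGaussianLaw X μ)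
    (hY : HasGaussianLaw Y μ) (hXY : IndepFun X Y μ) :
    HasGaussianLaw (fun ω ↦ (sufficientStat σX σY β (X ω) (Y ω),
      stdResidual σX σY β (X ω) (Y ω))) μ := by
  simp only [sufficientStat_eq_linear, stdResidual_eq_linear]
  exact (hXY.hasGaussianLaw hX hY).prodMk_linear _ _ _ _

lemma covariance_sufficientStat_stdResidual [IsFiniteMeasure μ] (hσX : σX ≠ 0) (hσY : σY ≠ 0)
    (hX : MemLp X 2 μ) (hY : MemLp Y 2 μ) (hXY : IndepFun X Y μ)
    (hVX : Var[X; μ] = σX ^ 2) (hVY : Var[Y; μ] = σY ^ 2) :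
    cov[fun ω ↦ sufficientStat σX σY β (X ω) (Y ω),
      fun ω ↦ stdResidual σX σY β (X ω) (Y ω); μ] = 0 := by
  simp only [sufficientStat_eq_linear, stdResidual_eq_linear]
  rw [hXY.covariance_linear hX hY, hVX, hVY]
  field_simp
  ring

lemma integral_stdResidual (hX : Integrable X μ) (hY : Integrable Y μ)
    (hmean : μ[Y] = β * μ[X]) :
    ∫ ω, stdResidual σX σY β (X ω) (Y ω) ∂μ = 0 := by
  simp only [stdResidual]
  rw [integral_div, integral_sub hY (hX.const_mul β), integral_const_mul, hmean, sub_self,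
    zero_div]

lemma indepFun_sufficientStat_stdResidual {m m' : ℝ} (hσX : σX ≠ 0) (hσY : σY ≠ 0)
    (hX : HasLaw X (gaussianReal m (σX ^ 2).toNNReal) μ)
    (hY : HasLaw Y (gaussianReal m' (σY ^ 2).toNNReal) μ) (hXY : IndepFun X Y μ) :
    IndepFun (fun ω ↦ sufficientStat σX σY β (X ω) (Y ω))
      (fun ω ↦ stdResidual σX σY β (X ω) (Y ω)) μ := by
  have hXg := hX.hasGaussianLaw
  have hYg := hY.hasGaussianLaw
  have := hXg.isProbabilityMeasure
  refine (hasGaussianLaw_sufficientStat_stdResidual hXg hYg hXY).indepFun_of_covariance_eq_zero ?_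
  refine covariance_sufficientStat_stdResidual hσX hσY hXg.memLp_two hYg.memLp_two hXY ?_ ?_
  · rw [hX.variance_eq_of_gaussianReal, Real.coe_toNNReal _ (sq_nonneg _)]
  · rw [hY.variance_eq_of_gaussianReal, Real.coe_toNNReal _ (sq_nonneg _)]

lemma integral_comp_sufficientStat_mul_comp_stdResidual {m : ℝ} (hσX : σX ≠ 0) (hσY : σY ≠ 0)
    (hX : HasLaw X (gaussianReal m (σX ^ 2).toNNReal) μ)
    (hY : HasLaw Y (gaussianReal (β * m) (σY ^ 2).toNNReal) μ) (hXY : IndepFun X Y μ)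
    {g ψ : ℝ → ℝ} (hg : Measurable g) (hψ : Measurable ψ) (hodd : ∀ t, ψ (-t) = -ψ t) :
    ∫ ω, g (sufficientStat σX σY β (X ω) (Y ω)) * ψ (stdResidual σX σY β (X ω) (Y ω)) ∂μ = 0 := by
  have hWT := hasGaussianLaw_sufficientStat_stdResidual (σX := σX) (σY := σY) (β := β)
    hX.hasGaussianLaw hY.hasGaussianLaw hXY
  have hT0 : ∫ ω, stdResidual σX σY β (X ω) (Y ω) ∂μ = 0 := by
    have := hX.hasGaussianLaw.isProbabilityMeasure
    refine integral_stdResidual hX.hasGaussianLaw.integrable hY.hasGaussianLaw.integrable ?_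
    rw [hX.integral_eq_of_gaussianReal, hY.integral_eq_of_gaussianReal]
  rw [(indepFun_sufficientStat_stdResidual hσX hσY hX hY hXY).integral_fun_comp_mul_comp
    hWT.fst.aemeasurable hWT.snd.aemeasurable hg.aestronglyMeasurable hψ.aestronglyMeasurable,
    hWT.snd.integral_comp_of_odd hT0 hψ hodd, mul_zero]

end MendelianRandomization

open MendelianRandomization

theorem estimating_function_unbiased_general
    {Ω : Type*} [MeasurableSpace Ω] (μ : Measure Ω)
    (p : ℕ) (γhat Γhat : Fin p → Ω → ℝ)
    (hγhat : ∀ j, Measurable (γhat j)) (hΓhat : ∀ j, Measurable (Γhat j))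
    (β : ℝ) (γ σX σY : Fin p → ℝ) (hσX : ∀ j, 0 < σX j) (hσY : ∀ j, 0 < σY j)
    (hγlaw : ∀ j, μ.map (γhat j) = gaussianReal (γ j) (Real.toNNReal ((σX j) ^ 2)))
    (hΓlaw : ∀ j, μ.map (Γhat j) = gaussianReal (β * γ j) (Real.toNNReal ((σY j) ^ 2)))
    (hindep : iIndepFun (Sum.elim γhat Γhat) μ)
    (f : Fin p → ℝ × ℝ → ℝ) (hf : ∀ j, Measurable (f j))
    (ψ : ℝ → ℝ) (hψ : Measurable ψ) (hψodd : ∀ t, ψ (-t) = -ψ t)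
    (hfint : ∀ j, Integrable
      (fun ω => f j (β, γhat j ω / (σX j) ^ 2 + β * Γhat j ω / (σY j) ^ 2)) μ)
    (hψint : ∀ j, Integrable
      (fun ω => ψ ((Γhat j ω - β * γhat j ω) / Real.sqrt (β ^ 2 * (σX j) ^ 2 + (σY j) ^ 2)))
      μ) :
    ∫ ω, (∑ j : Fin p,
        f j (β, γhat j ω / (σX j) ^ 2 + β * Γhat j ω / (σY j) ^ 2)
          * ψ ((Γhat j ω - β * γhat j ω) / Real.sqrt (β ^ 2 * (σX j) ^ 2 + (σY j) ^ 2))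
          / Real.sqrt (β ^ 2 * (σX j) ^ 2 + (σY j) ^ 2)) ∂μ = 0 := by
  have hX j : HasLaw (γhat j) _ μ := ⟨(hγhat j).aemeasurable, hγlaw j⟩
  have hY j : HasLaw (Γhat j) _ μ := ⟨(hΓhat j).aemeasurable, hΓlaw j⟩
  have hXY j : IndepFun (γhat j) (Γhat j) μ := by
    simpa using hindep.indepFun (Sum.inl_ne_inr (a := j) (b := j))
  have hfβ j : Measurable fun w ↦ f j (β, w) := (hf j).comp measurable_prodMk_left
  have hind j := (indepFun_sufficientStat_stdResidual (β := β) (hσX j).ne' (hσY j).ne'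
    (hX j) (hY j) (hXY j)).comp (hfβ j) hψ
  refine (integral_finsetSum _ fun j _ ↦ ?_).trans (Finset.sum_eq_zero fun j _ ↦ ?_)
  · exact ((hind j).integrable_mul (hfint j) (hψint j)).div_const _
  · rw [integral_div, div_eq_zero_iff]
    exact .inl (integral_comp_sufficientStat_mul_comp_stdResidual (hσX j).ne' (hσY j).ne'
      (hX j) (hY j) (hXY j) (hfβ j) hψ hψodd)

/-- **Unbiasedness of the general estimating function.**
For `p` SNPs with `γ̂ⱼ ~ N(γⱼ, σ_Xⱼ²)` and `Γ̂ⱼ ~ N(βγⱼ, σ_Yⱼ²)` all mutually independent,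
with `Wⱼ(β) = γ̂ⱼ/σ_Xⱼ² + βΓ̂ⱼ/σ_Yⱼ²` and
`tⱼ(β) = (Γ̂ⱼ - βγ̂ⱼ)/√(β²σ_Xⱼ² + σ_Yⱼ²)`, any estimating function
`C(β) = ∑ⱼ fⱼ(β, Wⱼ(β)) ψ(tⱼ(β))/√(β²σ_Xⱼ² + σ_Yⱼ²)` with measurable `fⱼ` and measurable
odd `ψ` (and integrable terms) is unbiased: `E[C(β)] = 0` at the true parameter. -/
theorem estimating_function_unbiased
    {Ω : Type*} [MeasurableSpace Ω] (μ : Measure Ω) [IsProbabilityMeasure μ]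
    (p : ℕ) (γhat Γhat : Fin p → Ω → ℝ)
    (hγhat : ∀ j, Measurable (γhat j)) (hΓhat : ∀ j, Measurable (Γhat j))
    (β : ℝ) (γ σX σY : Fin p → ℝ) (hσX : ∀ j, 0 < σX j) (hσY : ∀ j, 0 < σY j)
    (hγlaw : ∀ j, μ.map (γhat j) = gaussianReal (γ j) (Real.toNNReal ((σX j) ^ 2)))
    (hΓlaw : ∀ j, μ.map (Γhat j) = gaussianReal (β * γ j) (Real.toNNReal ((σY j) ^ 2)))
    (hindep : iIndepFun (Sum.elim γhat Γhat) μ)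
    (f : Fin p → ℝ × ℝ → ℝ) (hf : ∀ j, Measurable (f j))
    (ψ : ℝ → ℝ) (hψ : Measurable ψ) (hψodd : ∀ t, ψ (-t) = -ψ t)
    (hfint : ∀ j, Integrable
      (fun ω => f j (β, γhat j ω / (σX j) ^ 2 + β * Γhat j ω / (σY j) ^ 2)) μ)
    (hψint : ∀ j, Integrable
      (fun ω => ψ ((Γhat j ω - β * γhat j ω) / Real.sqrt (β ^ 2 * (σX j) ^ 2 + (σY j) ^ 2)))
      μ) :
    ∫ ω, (∑ j : Fin p,
        f j (β, γhat j ω / (σX j) ^ 2 + β * Γhat j ω / (σY j) ^ 2)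
          * ψ ((Γhat j ω - β * γhat j ω) / Real.sqrt (β ^ 2 * (σX j) ^ 2 + (σY j) ^ 2))
          / Real.sqrt (β ^ 2 * (σX j) ^ 2 + (σY j) ^ 2)) ∂μ = 0 :=
  estimating_function_unbiased_general μ p γhat Γhat hγhat hΓhat β γ σX σY hσX hσY hγlaw hΓlaw
    hindep f hf ψ hψ hψodd hfint hψint
end

section
/- Fix $\beta \in \mathbb{R}$, $\tau^2 \ge 0$, $\sigma_{Xj}, \sigma_{Yj} > 0$ for $j = 1, \dots, p$, and data $(\hat{\gamma}_j, \hat{\Gamma}_j)_{j=1}^p$. Let $s_j = \sqrt{\beta^2\sigma_{Xj}^2 + \sigma_{Yj}^2 + \tau^2}$, $t_j = (\hat{\Gamma}_j - \beta\hat{\gamma}_j)/s_j$, $W_j = \hat{\gamma}_j/\sigma_{Xj}^2 + \beta\hat{\Gamma}_j/\sigma_{Yj}^2$, and let the weight be $\hat{\gamma}_{j,\mathrm{EB}} = g_j(W_j)$ where each $g_j : \mathbb{R} \to \mathbb{R}$ is an odd function. Let $\psi_1$ be an odd function and $\psi_2$ an even function. Then the estimating functions $\tilde{C}_1 = \sum_{j=1}^p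 g_j(W_j)\psi_1(t_j)/s_j$ and $\tilde{C}_2 = \sum_{j=1}^p (\psi_2(t_j) - \delta)/s_j^2$ are invariant to recoding any single SNP's alleles: replacing a pair $(\hat{\gamma}_j, \hat{\Gamma}_j)$ by $(-\hat{\gamma}_j, -\hat{\Gamma}_j)$ leaves the values of $\tilde{C}_1$ and $\tilde{C}_2$ unchanged. -/
open Real

/-- **Invariance of the RAPS estimating functions under allele recoding.**
With `sⱼ = √(β²σ_Xⱼ² + σ_Yⱼ² + τ²)`, `tⱼ = (Γ̂ⱼ - βγ̂ⱼ)/sⱼ`,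
`Wⱼ = γ̂ⱼ/σ_Xⱼ² + βΓ̂ⱼ/σ_Yⱼ²`, odd weight functions `gⱼ`, odd `ψ₁` and even `ψ₂`,
replacing any single pair `(γ̂ⱼ₀, Γ̂ⱼ₀)` by `(-γ̂ⱼ₀, -Γ̂ⱼ₀)` leaves both estimating functions
`C̃₁ = ∑ⱼ gⱼ(Wⱼ)ψ₁(tⱼ)/sⱼ` and `C̃₂ = ∑ⱼ (ψ₂(tⱼ) - δ)/sⱼ²` unchanged. -/
theorem raps_invariant_allele_recoding
    (p : ℕ) (β τsq : ℝ) (hτsq : 0 ≤ τsq)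
    (σX σY : Fin p → ℝ) (hσX : ∀ j, 0 < σX j) (hσY : ∀ j, 0 < σY j)
    (γhat Γhat : Fin p → ℝ)
    (g : Fin p → ℝ → ℝ) (hg : ∀ j x, g j (-x) = -g j x)
    (ψ₁ ψ₂ : ℝ → ℝ) (hψ₁odd : ∀ t, ψ₁ (-t) = -ψ₁ t) (hψ₂even : ∀ t, ψ₂ (-t) = ψ₂ t)
    (δ : ℝ) (j₀ : Fin p) :
    (∑ j : Fin p,
        g j (Function.update γhat j₀ (-γhat j₀) j / (σX j) ^ 2
            + β * Function.update Γhat j₀ (-Γhat j₀) j / (σY j) ^ 2)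
          * ψ₁ ((Function.update Γhat j₀ (-Γhat j₀) j
                  - β * Function.update γhat j₀ (-γhat j₀) j)
              / Real.sqrt (β ^ 2 * (σX j) ^ 2 + (σY j) ^ 2 + τsq))
          / Real.sqrt (β ^ 2 * (σX j) ^ 2 + (σY j) ^ 2 + τsq)
      = ∑ j : Fin p,
          g j (γhat j / (σX j) ^ 2 + β * Γhat j / (σY j) ^ 2)
            * ψ₁ ((Γhat j - β * γhat j) / Real.sqrt (β ^ 2 * (σX j) ^ 2 + (σY j) ^ 2 + τsq))
            / Real.sqrt (β ^ 2 * (σX j) ^ 2 + (σY j) ^ 2 + τsq))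
    ∧ (∑ j : Fin p,
          (ψ₂ ((Function.update Γhat j₀ (-Γhat j₀) j
                  - β * Function.update γhat j₀ (-γhat j₀) j)
              / Real.sqrt (β ^ 2 * (σX j) ^ 2 + (σY j) ^ 2 + τsq)) - δ)
            / (Real.sqrt (β ^ 2 * (σX j) ^ 2 + (σY j) ^ 2 + τsq)) ^ 2
        = ∑ j : Fin p,
            (ψ₂ ((Γhat j - β * γhat j)
                / Real.sqrt (β ^ 2 * (σX j) ^ 2 + (σY j) ^ 2 + τsq)) - δ)
              / (Real.sqrt (β ^ 2 * (σX j) ^ 2 + (σY j) ^ 2 + τsq)) ^ 2) := by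
  constructor
  · apply Finset.sum_congr rfl
    intro j _
    by_cases hj : j = j₀
    · subst hj
      simp only [Function.update_self]
      rw [show -γhat j / σX j ^ 2 + β * -Γhat j / σY j ^ 2
            = -(γhat j / σX j ^ 2 + β * Γhat j / σY j ^ 2) by ring,
          show -Γhat j - β * -γhat j = -(Γhat j - β * γhat j) by ring,
          neg_div, hψ₁odd, hg]
      ring
    · simp [Function.update_of_ne hj]
  · apply Finset.sum_congr rfl
    intro j _
    by_cases hj : j = j₀
    · subst hj
      simp only [Function.update_self]
      rw [show -Γhat j - β * -γhat j = -(Γhat j - β * γhat j) by ring,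
          neg_div, hψ₂even]
    · simp [Function.update_of_ne hj]
end
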